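/- Let σ be the permutation of {1,...,2n} sending (1,2,3,4,...,2n-1,2n) to (i_1, n+1, i_2, n+2, ..., i_n, 2n), where (i_1,...,i_n) is a permutation of {1,...,n}. Then sgn(σ) = (-1)^{n(n-1)/2} · sgn(i_1,...,i_n), where sgn(i_1,...,i_n) is the sign of the permutation of {1,...,n} sending k to i_k. -/

import Mathlib

/-! σ factors as the deinterleaving permutation `2k ↦ k, 2k+1 ↦ n+k` followed by τ acting on
the first half `{0,…,n-1}`. The inversions of the deinterleaving permutation are exactly the
pairs of positions `2a+1 < 2b` with `a < b`, so there are `n(n-1)/2` of them. -/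

open Equiv Equiv.Perm Finset

theorem Equiv.Perm.sign_eq_neg_one_pow_card_inversions {m : ℕ} (π : Perm (Fin m)) :
    sign π = (-1) ^ #{p : Fin m × Fin m | p.1 < p.2 ∧ π p.2 < π p.1} := by
  rw [sign_eq_prod_prod_Iio, ← prod_const, prod_filter, Fintype.prod_prod_type_right]
  refine prod_congr rfl fun j _ => ?_
  rw [← filter_gt_eq_Iio, prod_filter]
  refine prod_congr rfl fun i _ => ?_
  by_cases hij : i < j
  · have hne : π i ≠ π j := π.injective.ne hij.ne
    rcases hne.lt_or_gt with h | h <;> simp [hij, h, h.not_gt]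
  · simp [hij]

theorem Fin.forall_two_mul_iff {n : ℕ} {P : Fin (2 * n) → Prop} :
    (∀ x, P x) ↔ (∀ k : Fin n, P ⟨2 * k, by omega⟩) ∧ (∀ k : Fin n, P ⟨2 * k + 1, by omega⟩) := by
  refine ⟨fun h => ⟨fun k => h _, fun k => h _⟩, fun ⟨heven, hodd⟩ x => ?_⟩
  obtain ⟨k, hk | hk⟩ := Nat.even_or_odd' x.val
  · simpa [← hk] using heven ⟨k, by omega⟩
  · simpa [← hk] using hodd ⟨k, by omega⟩

theorem card_filter_fst_lt_snd (n : ℕ) :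
    #{p : Fin n × Fin n | p.1 < p.2} = n * (n - 1) / 2 := by
  rw [card_filter, Fintype.sum_prod_type_right]
  simp_rw [← card_filter, filter_gt_eq_Iio, Fin.card_Iio]
  rw [Fin.sum_univ_eq_sum_range (fun i => i) n, sum_range_id]

def deinterleave (n : ℕ) : Perm (Fin (2 * n)) where
  toFun x := ⟨if x.val % 2 = 0 then x.val / 2 else n + x.val / 2, by split <;> omega⟩
  invFun y := ⟨if y.val < n then 2 * y.val else 2 * (y.val - n) + 1, by split <;> omega⟩
  left_inv x := by ext; dsimp only; split_ifs <;> omega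
  right_inv y := by ext; dsimp only; split_ifs <;> omega

theorem deinterleave_apply_val (n : ℕ) (x : Fin (2 * n)) :
    (deinterleave n x : ℕ) = if x.val % 2 = 0 then x.val / 2 else n + x.val / 2 :=
  rfl

theorem card_inversions_deinterleave (n : ℕ) :
    #{p : Fin (2 * n) × Fin (2 * n) |
      p.1 < p.2 ∧ deinterleave n p.2 < deinterleave n p.1} = n * (n - 1) / 2 := by
  rw [← card_filter_fst_lt_snd n]
  refine card_nbij' (fun p => (⟨p.1 / 2, by omega⟩, ⟨p.2 / 2, by omega⟩))
    (fun q => (⟨2 * q.1 + 1, by omega⟩, ⟨2 * q.2, by omega⟩)) ?_ ?_ ?_ ?_ <;>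
  · simp only [Set.MapsTo, Set.LeftInvOn, coe_filter, mem_univ, true_and, Set.mem_ofPred_eq,
      Fin.lt_def, deinterleave_apply_val, Prod.forall, Prod.ext_iff, Fin.ext_iff]
    intros
    (try split_ifs at *) <;> omega

theorem sign_deinterleave (n : ℕ) : sign (deinterleave n) = (-1) ^ (n * (n - 1) / 2) := by
  rw [sign_eq_neg_one_pow_card_inversions, card_inversions_deinterleave]

theorem deinterleave_two_mul (n : ℕ) (k : Fin n) :
    deinterleave n ⟨2 * k, by omega⟩ = Fin.castLE (by omega) k := by
  ext; simp [deinterleave_apply_val]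

theorem deinterleave_two_mul_add_one (n : ℕ) (k : Fin n) :
    deinterleave n ⟨2 * k + 1, by omega⟩ = ⟨n + k, by omega⟩ := by
  ext; simp [deinterleave_apply_val]; omega

/-- Let `σ` be the permutation of `{1,…,2n}` sending `(1,2,3,4,…,2n-1,2n)` to
`(i₁, n+1, i₂, n+2, …, iₙ, 2n)`, where `(i₁,…,iₙ)` is the permutation `τ` of `{1,…,n}`.
Then `sgn σ = (-1)^{n(n-1)/2} · sgn τ`. -/
theorem sign_interleaved_perm (n : ℕ) (τ : Equiv.Perm (Fin n))
    (σ : Equiv.Perm (Fin (2 * n)))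
    (h1 : ∀ k : Fin n,
      σ ⟨2 * (k : ℕ), by have := k.isLt; omega⟩ =
        ⟨(τ k : ℕ), by have := (τ k).isLt; omega⟩)
    (h2 : ∀ k : Fin n,
      σ ⟨2 * (k : ℕ) + 1, by have := k.isLt; omega⟩ =
        ⟨n + (k : ℕ), by have := k.isLt; omega⟩) :
    Equiv.Perm.sign σ = (-1) ^ (n * (n - 1) / 2) * Equiv.Perm.sign τ := by
  let e := Fin.castLEquiv (show n ≤ 2 * n by omega)
  have hσ : σ = τ.extendDomain e * deinterleave n := by
    refine Equiv.ext (Fin.forall_two_mul_iff.2 ⟨fun k => ?_, fun k => ?_⟩)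
    · rw [mul_apply, deinterleave_two_mul, h1]
      exact (extendDomain_apply_image τ e k).symm
    · rw [mul_apply, deinterleave_two_mul_add_one, h2, extendDomain_apply_not_subtype]
      simp
  rw [hσ, Perm.sign_mul, sign_extendDomain, sign_deinterleave, mul_comm]
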